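/- arXiv:1302.2857 — 2 statements merged into one kernel-verified Lean document; each statement's English description precedes it below -/
import Mathlib

section
/- Let J be a complex structure on E and let Ω^♯ be a holomorphic symplectic structure on E relative to J. Set I = Ω^♯ + Ω̄^♯ and K = −i(Ω^♯ − Ω̄^♯), ℂ-linear endomorphisms of E_ℂ. Then I and K commute with complex conjugation (hence preserve the real subspace E ⊂ E_ℂ); I, J, K satisfy I² = J² = K² = IJK = −id and are orthogonal for the pairing; and all six Nijenhuis concomitants N(I,I), N(I,J), N(I,K), N(J,J), N(J,K), N(K,K) (formed with the ℂ-bilinearly extended bracket) vanish identically — that is, (I,J,K) restricts to a hypercomplex structure on E. -/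
open scoped TensorProduct
section BC

variable {M N P : Type} [AddCommGroup M] [Module ℝ M] [AddCommGroup N] [Module ℝ N]
  [AddCommGroup P] [Module ℝ P]

/-- Complex-bilinear extension of an `ℝ`-bilinear map to the complexifications. -/
noncomputable def bcBilin (B : M →ₗ[ℝ] N →ₗ[ℝ] P) :
    ℂ ⊗[ℝ] M →ₗ[ℂ] ℂ ⊗[ℝ] N →ₗ[ℂ] ℂ ⊗[ℝ] P :=
  LinearMap.liftBaseChange ℂ ((LinearMap.baseChangeHom ℝ ℂ N P) ∘ₗ B)

/-- Complex conjugation on the complexification `ℂ ⊗[ℝ] M`. -/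
noncomputable def conjT (M : Type) [AddCommGroup M] [Module ℝ M] :
    ℂ ⊗[ℝ] M →ₗ[ℝ] ℂ ⊗[ℝ] M :=
  TensorProduct.map Complex.conjAe.toLinearMap LinearMap.id

/-- The `i`-eigenspace of a `ℂ`-linear endomorphism of `ℂ ⊗[ℝ] M`. -/
def eigP (Jc : ℂ ⊗[ℝ] M →ₗ[ℂ] ℂ ⊗[ℝ] M) : Set (ℂ ⊗[ℝ] M) :=
  {e | Jc e = Complex.I • e}

/-- The `-i`-eigenspace of a `ℂ`-linear endomorphism of `ℂ ⊗[ℝ] M`. -/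
def eigM (Jc : ℂ ⊗[ℝ] M →ₗ[ℂ] ℂ ⊗[ℝ] M) : Set (ℂ ⊗[ℝ] M) :=
  {e | Jc e = -(Complex.I • e)}

end BC

/-- An (algebraic) Courant algebroid: a commutative `ℝ`-algebra `A`, an `A`-module `E`,
a nondegenerate symmetric `A`-bilinear pairing, an anchor with values in `ℝ`-linear
derivations of `A`, a map `Dm : A → E`, and an `ℝ`-bilinear Dorfman bracket. -/
structure CourantAlgebroid (A E : Type) [CommRing A] [Algebra ℝ A]
    [AddCommGroup E] [Module ℝ E] [Module A E] [IsScalarTower ℝ A E] : Type where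
  pair : E →ₗ[A] E →ₗ[A] A
  pair_symm : ∀ x y, pair x y = pair y x
  pair_nondeg : ∀ x, (∀ y, pair x y = 0) → x = 0
  anchor : E →ₗ[A] Derivation ℝ A A
  Dm : A →ₗ[ℝ] E
  pair_Dm : ∀ (f : A) (x : E), pair (Dm f) x = (1/2 : ℝ) • anchor x f
  brac : E →ₗ[ℝ] E →ₗ[ℝ] E
  brac_leibniz : ∀ x y z, brac x (brac y z) = brac (brac x y) z + brac y (brac x z)
  anchor_brac : ∀ (x y : E) (f : A),
    anchor (brac x y) f = anchor x (anchor y f) - anchor y (anchor x f)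
  brac_smul : ∀ (f : A) (x y : E), brac x (f • y) = anchor x f • y + f • brac x y
  brac_add_swap : ∀ x y, brac x y + brac y x = (2 : ℝ) • Dm (pair x y)
  Dm_brac : ∀ (f : A) (x : E), brac (Dm f) x = 0
  anchor_pair : ∀ x y z, anchor x (pair y z) = pair (brac x y) z + pair y (brac x z)

namespace CourantAlgebroid

variable {A E : Type} [CommRing A] [Algebra ℝ A]
    [AddCommGroup E] [Module ℝ E] [Module A E] [IsScalarTower ℝ A E]

/-- The Nijenhuis concomitant of two operators with respect to a bracket. -/
def nijGen {M : Type*} [AddCommGroup M] (br : M → M → M) (F G : M → M) (U V : M) : M :=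
  br (F U) (G V) - F (br U (G V)) - G (br (F U) V) + F (G (br U V))
    + br (G U) (F V) - G (br U (F V)) - F (br (G U) V) + G (F (br U V))

/-- The Nijenhuis concomitant `N(F,G)` of two `A`-linear endomorphisms of `E`. -/
def nij (C : CourantAlgebroid A E) (F G : E →ₗ[A] E) (U V : E) : E :=
  nijGen (fun x y => C.brac x y) (fun e => F e) (fun e => G e) U V

/-- An almost complex structure: an orthogonal endomorphism squaring to `-1`. -/
def IsAlmostComplexStr (C : CourantAlgebroid A E) (J : E →ₗ[A] E) : Prop :=
  (∀ e, J (J e) = -e) ∧ ∀ x y, C.pair (J x) (J y) = C.pair x y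

/-- A complex structure: an almost complex structure with vanishing Nijenhuis concomitant. -/
def IsComplexStr (C : CourantAlgebroid A E) (J : E →ₗ[A] E) : Prop :=
  C.IsAlmostComplexStr J ∧ ∀ U V, C.nij J J U V = 0

/-- An almost hypercomplex structure: a triple of almost complex structures
satisfying the quaternionic relations. -/
def IsAlmostHypercomplex (C : CourantAlgebroid A E) (I J K : E →ₗ[A] E) : Prop :=
  C.IsAlmostComplexStr I ∧ C.IsAlmostComplexStr J ∧ C.IsAlmostComplexStr K ∧
    ∀ e, I (J (K e)) = -e

/-- A hypercomplex structure: an almost hypercomplex structure all of whose six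
Nijenhuis concomitants vanish. -/
def IsHypercomplex (C : CourantAlgebroid A E) (I J K : E →ₗ[A] E) : Prop :=
  C.IsAlmostHypercomplex I J K ∧
    (∀ U V, C.nij I I U V = 0) ∧ (∀ U V, C.nij I J U V = 0) ∧ (∀ U V, C.nij I K U V = 0) ∧
    (∀ U V, C.nij J J U V = 0) ∧ (∀ U V, C.nij J K U V = 0) ∧ (∀ U V, C.nij K K U V = 0)

/-- The Poisson-type bracket on `A` induced by a skew-symmetric endomorphism `F`. -/
def pb (C : CourantAlgebroid A E) (F : E →ₗ[A] E) (f g : A) : A :=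
  C.pair (F (C.Dm f)) (C.Dm g)

/-- `Δ_f(U,V)` associated with an almost hypercomplex triple. -/
def Delta (C : CourantAlgebroid A E) (I J K : E →ₗ[A] E) (f : A) (U V : E) : E :=
  C.pair U V • C.Dm f + C.pair (I U) V • I (C.Dm f) + C.pair (J U) V • J (C.Dm f)
    + C.pair (K U) V • K (C.Dm f)

/-- A hypercomplex connection relative to an almost hypercomplex triple. -/
def IsHConn (C : CourantAlgebroid A E) (I J K : E →ₗ[A] E)
    (conn : E →ₗ[ℝ] E →ₗ[ℝ] E) : Prop :=
  (∀ (f : A) (U V : E), conn (f • U) V = f • conn U V) ∧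
  (∀ (f : A) (U V : E),
    conn U (f • V) = C.anchor U f • V + f • conn U V - C.Delta I J K f U V)

/-- The torsion of an `ℝ`-bilinear connection. -/
noncomputable def torsion (C : CourantAlgebroid A E) (conn : E →ₗ[ℝ] E →ₗ[ℝ] E) (U V : E) : E :=
  conn U V - conn V U - (1/2 : ℝ) • (C.brac U V - C.brac V U)

/-- The canonical hypercomplex connection. -/
noncomputable def hconn (C : CourantAlgebroid A E) (I J K : E →ₗ[A] E) (U V : E) : E :=
  -((1/2 : ℝ) • K (C.brac (J V) (I U) - J (C.brac V (I U)) - I (C.brac (J V) U)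
      + J (I (C.brac V U))))

/-- The pairing as an `ℝ`-bilinear map. -/
noncomputable def pairR (C : CourantAlgebroid A E) : E →ₗ[ℝ] E →ₗ[ℝ] A :=
  LinearMap.mk₂ ℝ (fun x y => C.pair x y)
    (fun x x' y => by simp)
    (fun r x y => by
      show C.pair (r • x) y = r • C.pair x y
      rw [← algebraMap_smul A r x, map_smul, LinearMap.smul_apply, algebraMap_smul])
    (fun x y y' => by simp)
    (fun r x y => by
      show C.pair x (r • y) = r • C.pair x y
      rw [← algebraMap_smul A r y, map_smul, algebraMap_smul])

/-- The anchor as an `ℝ`-bilinear map `E → A → A`. -/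
noncomputable def rhoR (C : CourantAlgebroid A E) : E →ₗ[ℝ] A →ₗ[ℝ] A :=
  LinearMap.mk₂ ℝ (fun x f => C.anchor x f)
    (fun x x' f => by simp)
    (fun r x f => by
      show C.anchor (r • x) f = r • C.anchor x f
      rw [← algebraMap_smul A r x, map_smul, Derivation.smul_apply, algebraMap_smul])
    (fun x f f' => by simp)
    (fun r x f => by simp)

/-- The `A`-module structure on `E` as an `ℝ`-bilinear map. -/
noncomputable def smulR (A E : Type) [CommRing A] [Algebra ℝ A]
    [AddCommGroup E] [Module ℝ E] [Module A E] [IsScalarTower ℝ A E] :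
    A →ₗ[ℝ] E →ₗ[ℝ] E :=
  LinearMap.mk₂ ℝ (fun a e => a • e)
    (fun a a' e => add_smul a a' e)
    (fun r a e => smul_assoc r a e)
    (fun a e e' => smul_add a e e')
    (fun r a e => smul_comm a r e)

/-- Complex-bilinear extension of the pairing. -/
noncomputable def pairC (C : CourantAlgebroid A E) :
    ℂ ⊗[ℝ] E →ₗ[ℂ] ℂ ⊗[ℝ] E →ₗ[ℂ] ℂ ⊗[ℝ] A := bcBilin C.pairR

/-- Complex-bilinear extension of the Dorfman bracket. -/
noncomputable def bracC (C : CourantAlgebroid A E) :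
    ℂ ⊗[ℝ] E →ₗ[ℂ] ℂ ⊗[ℝ] E →ₗ[ℂ] ℂ ⊗[ℝ] E := bcBilin C.brac

/-- Complex-bilinear extension of the anchor. -/
noncomputable def rhoC (C : CourantAlgebroid A E) :
    ℂ ⊗[ℝ] E →ₗ[ℂ] ℂ ⊗[ℝ] A →ₗ[ℂ] ℂ ⊗[ℝ] A := bcBilin C.rhoR

/-- Complex-bilinear extension of the `A`-action on `E`. -/
noncomputable def smulC (C : CourantAlgebroid A E) :
    ℂ ⊗[ℝ] A →ₗ[ℂ] ℂ ⊗[ℝ] E →ₗ[ℂ] ℂ ⊗[ℝ] E := bcBilin (smulR A E)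

/-- The `ℂ`-linear extension of an `A`-linear endomorphism of `E` to `ℂ ⊗[ℝ] E`. -/
noncomputable def cext (F : E →ₗ[A] E) : ℂ ⊗[ℝ] E →ₗ[ℂ] ℂ ⊗[ℝ] E :=
  (F.restrictScalars ℝ).baseChange ℂ

/-- `Ω^♯ = (1/2)(I + iK)` associated with an (almost) hypercomplex triple. -/
noncomputable def OmS (I K : E →ₗ[A] E) : ℂ ⊗[ℝ] E →ₗ[ℂ] ℂ ⊗[ℝ] E :=
  (1/2 : ℂ) • (cext I + Complex.I • cext K)

/-- `Ω̄^♯ = (1/2)(I - iK)` associated with an (almost) hypercomplex triple. -/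
noncomputable def ObS (I K : E →ₗ[A] E) : ℂ ⊗[ℝ] E →ₗ[ℂ] ℂ ⊗[ℝ] E :=
  (1/2 : ℂ) • (cext I - Complex.I • cext K)

/-- `Ω(ξ,η) = ⟨Ω^♯ξ, η⟩`. -/
noncomputable def Omf (C : CourantAlgebroid A E) (I K : E →ₗ[A] E)
    (x y : ℂ ⊗[ℝ] E) : ℂ ⊗[ℝ] A :=
  C.pairC (OmS I K x) y

/-- The complexified hypercomplex connection on `ℂ ⊗[ℝ] E`. -/
noncomputable def hconnC (C : CourantAlgebroid A E) (I J K : E →ₗ[A] E)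
    (U V : ℂ ⊗[ℝ] E) : ℂ ⊗[ℝ] E :=
  -((1/2 : ℂ) • cext K (C.bracC (cext J V) (cext I U) - cext J (C.bracC V (cext I U))
      - cext I (C.bracC (cext J V) U) + cext J (cext I (C.bracC V U))))

end CourantAlgebroid

open CourantAlgebroid
/-!
Write `Ω = Os`, `Ω̄ = conjOp Os`, `L = L_J` and `L̄ = L*_J`. The axioms make `Ω` vanish on `L` and
map into `L`, make `Ω̄` vanish on `L̄` and map into `L̄`, and give `ΩΩ̄ + Ω̄Ω = -1`. Hence
`Ω² = Ω̄² = 0`, and `F = aΩ + bΩ̄` satisfies `F² = -ab` and `⟨F·, F·⟩ = ab ⟨·, ·⟩`; both `I`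
(`a = b = 1`) and `K` (`a = -i`, `b = i`) have `ab = 1`, and `JK = I` since `J = ±i` on `L`, `L̄`.

When `b = ā`, `F` commutes with conjugation, so the concomitant of two such operators, or of one
and `J`, is real; being biadditive it vanishes as soon as it vanishes on `L × L` and `L × L̄`. There
everything reduces to the involutivity of `L` and `L̄` (from `N(J, J) = 0`) and to the identity
`Ω̄([x, Ωy] + [Ωx, y]) = -[x, y]` on `L̄`, which is the closedness of `Ω` read through the
nondegenerate pairing and the Courant axioms.
-/

section Complexification

variable {M N P : Type} [AddCommGroup M] [Module ℝ M] [AddCommGroup N] [Module ℝ N]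
  [AddCommGroup P] [Module ℝ P]

@[simp]
lemma conjT_tmul (z : ℂ) (m : M) : conjT M (z ⊗ₜ m) = (starRingEnd ℂ) z ⊗ₜ m := rfl

@[simp]
lemma conjT_conjT (x : ℂ ⊗[ℝ] M) : conjT M (conjT M x) = x := by
  induction x using TensorProduct.induction_on with
  | zero => simp
  | tmul z m => simp
  | add a b ha hb => simp only [map_add, ha, hb]

lemma conjT_smul (c : ℂ) (x : ℂ ⊗[ℝ] M) :
    conjT M (c • x) = (starRingEnd ℂ) c • conjT M x := by
  induction x using TensorProduct.induction_on with
  | zero => simp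
  | tmul z m => simp [TensorProduct.smul_tmul']
  | add a b ha hb => simp only [map_add, smul_add, ha, hb]

lemma baseChange_conjT (f : M →ₗ[ℝ] N) (x : ℂ ⊗[ℝ] M) :
    f.baseChange ℂ (conjT M x) = conjT N (f.baseChange ℂ x) := by
  induction x using TensorProduct.induction_on with
  | zero => simp
  | tmul z m => simp
  | add a b ha hb => simp only [map_add, ha, hb]

@[simp]
lemma bcBilin_tmul (B : M →ₗ[ℝ] N →ₗ[ℝ] P) (z w : ℂ) (m : M) (n : N) :
    bcBilin B (z ⊗ₜ m) (w ⊗ₜ n) = (z * w) ⊗ₜ B m n := by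
  simp [bcBilin, TensorProduct.smul_tmul', smul_eq_mul]

lemma bcBilin_conjT (B : M →ₗ[ℝ] N →ₗ[ℝ] P) (x : ℂ ⊗[ℝ] M) (y : ℂ ⊗[ℝ] N) :
    bcBilin B (conjT M x) (conjT N y) = conjT P (bcBilin B x y) := by
  induction x using TensorProduct.induction_on with
  | zero => simp
  | add a b ha hb => simp only [map_add, LinearMap.add_apply, ha, hb]
  | tmul z m =>
    induction y using TensorProduct.induction_on with
    | zero => simp
    | tmul w n => simp
    | add a b ha hb => simp only [map_add, ha, hb]

lemma bcBilin_comm {B : M →ₗ[ℝ] M →ₗ[ℝ] P} (hB : ∀ m n, B m n = B n m) (x y : ℂ ⊗[ℝ] M) :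
    bcBilin B x y = bcBilin B y x := by
  induction x using TensorProduct.induction_on with
  | zero => simp
  | add a b ha hb => simp only [map_add, LinearMap.add_apply, ha, hb]
  | tmul z m =>
    induction y using TensorProduct.induction_on with
    | zero => simp
    | tmul w n => rw [bcBilin_tmul, bcBilin_tmul, mul_comm, hB]
    | add a b ha hb => simp only [map_add, LinearMap.add_apply, ha, hb]

noncomputable def complexCoord (f : ℂ →ₗ[ℝ] ℝ) (M : Type) [AddCommGroup M] [Module ℝ M] :
    ℂ ⊗[ℝ] M →ₗ[ℝ] M :=
  TensorProduct.lid ℝ M ∘ₗ f.rTensor M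

@[simp]
lemma complexCoord_tmul (f : ℂ →ₗ[ℝ] ℝ) (z : ℂ) (m : M) :
    complexCoord f M (z ⊗ₜ m) = f z • m := rfl

lemma one_tmul_re_add_I_tmul_im (x : ℂ ⊗[ℝ] M) :
    (1 : ℂ) ⊗ₜ complexCoord Complex.reLm M x + Complex.I ⊗ₜ complexCoord Complex.imLm M x
      = x := by
  induction x using TensorProduct.induction_on with
  | zero => simp
  | add a b ha hb => rw [map_add, map_add, TensorProduct.tmul_add, TensorProduct.tmul_add,
      add_add_add_comm, ha, hb]
  | tmul z m =>
    rw [complexCoord_tmul, complexCoord_tmul, TensorProduct.tmul_smul, TensorProduct.tmul_smul,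
      TensorProduct.smul_tmul', TensorProduct.smul_tmul', ← TensorProduct.add_tmul]
    simp [Complex.real_smul, Complex.re_add_im]

lemma complexCoord_bcBilin_one_tmul (f : ℂ →ₗ[ℝ] ℝ) (B : M →ₗ[ℝ] N →ₗ[ℝ] P)
    (x : ℂ ⊗[ℝ] M) (n : N) :
    complexCoord f P (bcBilin B x (1 ⊗ₜ n)) = B (complexCoord f M x) n := by
  induction x using TensorProduct.induction_on with
  | zero => simp
  | tmul z m => simp
  | add a b ha hb => simp only [map_add, LinearMap.add_apply, ha, hb]

lemma bcBilin_left_nondegenerate {B : M →ₗ[ℝ] N →ₗ[ℝ] P}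
    (hB : ∀ m, (∀ n, B m n = 0) → m = 0) {x : ℂ ⊗[ℝ] M} (hx : ∀ y, bcBilin B x y = 0) :
    x = 0 := by
  have hcoord (f : ℂ →ₗ[ℝ] ℝ) : complexCoord f M x = 0 :=
    hB _ fun n => by rw [← complexCoord_bcBilin_one_tmul, hx, map_zero]
  rw [← one_tmul_re_add_I_tmul_im x, hcoord, hcoord, TensorProduct.tmul_zero,
    TensorProduct.tmul_zero, add_zero]

end Complexification

section ConjugateOperator

variable {M N : Type} [AddCommGroup M] [Module ℝ M] [AddCommGroup N] [Module ℝ N]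

noncomputable def conjOp (f : ℂ ⊗[ℝ] M →ₗ[ℂ] ℂ ⊗[ℝ] N) : ℂ ⊗[ℝ] M →ₗ[ℂ] ℂ ⊗[ℝ] N where
  toFun x := conjT N (f (conjT M x))
  map_add' x y := by simp only [map_add]
  map_smul' c x := by simp only [conjT_smul, map_smul, RingHom.id_apply, Complex.conj_conj]

variable (f : ℂ ⊗[ℝ] M →ₗ[ℂ] ℂ ⊗[ℝ] N)

lemma conjOp_apply (x : ℂ ⊗[ℝ] M) : conjOp f x = conjT N (f (conjT M x)) := rfl

@[simp]
lemma conjT_conjOp (x : ℂ ⊗[ℝ] M) : conjT N (conjOp f x) = f (conjT M x) := by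
  simp [conjOp_apply]

@[simp]
lemma conjOp_conjT (x : ℂ ⊗[ℝ] M) : conjOp f (conjT M x) = conjT N (f x) := by
  simp [conjOp_apply]

lemma smul_add_smul_conjOp_conjT {a b : ℂ} (hab : starRingEnd ℂ a = b) (x : ℂ ⊗[ℝ] M) :
    (a • f + b • conjOp f) (conjT M x) = conjT N ((a • f + b • conjOp f) x) := by
  subst hab
  simp [conjT_smul, add_comm]

end ConjugateOperator

section Nijenhuis

variable {R W : Type*} [CommSemiring R] [AddCommGroup W] [Module R W]

lemma nijGen_comm (br : W → W → W) (F G : W → W) (U V : W) :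
    nijGen br F G U V = nijGen br G F U V := by
  simp only [nijGen]; abel

lemma nijGen_add_left (br : W →ₗ[R] W →ₗ[R] W) (F G : W →ₗ[R] W) (U U' V : W) :
    nijGen (fun x y => br x y) F G (U + U') V =
      nijGen (fun x y => br x y) F G U V + nijGen (fun x y => br x y) F G U' V := by
  simp only [nijGen, map_add, LinearMap.add_apply]; abel

lemma nijGen_add_right (br : W →ₗ[R] W →ₗ[R] W) (F G : W →ₗ[R] W) (U V V' : W) :
    nijGen (fun x y => br x y) F G U (V + V') =
      nijGen (fun x y => br x y) F G U V + nijGen (fun x y => br x y) F G U V' := by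
  simp only [nijGen, map_add]; abel

lemma map_nijGen {Φ : Type*} [FunLike Φ W W] [AddMonoidHomClass Φ W W] (σ : Φ)
    {br : W → W → W} {F G : W → W} (hbr : ∀ x y, σ (br x y) = br (σ x) (σ y))
    (hF : ∀ x, σ (F x) = F (σ x)) (hG : ∀ x, σ (G x) = G (σ x)) (U V : W) :
    σ (nijGen br F G U V) = nijGen br F G (σ U) (σ V) := by
  simp only [nijGen, map_add, map_sub, hbr, hF, hG]

end Nijenhuis

section Eigenspaces

variable {M : Type} [AddCommGroup M] [Module ℝ M] {T : ℂ ⊗[ℝ] M →ₗ[ℂ] ℂ ⊗[ℝ] M}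

lemma mem_eigP_iff {e : ℂ ⊗[ℝ] M} : e ∈ eigP T ↔ T e = Complex.I • e := Iff.rfl

lemma mem_eigM_iff {e : ℂ ⊗[ℝ] M} : e ∈ eigM T ↔ T e = (-Complex.I) • e := by
  rw [neg_smul]; rfl

lemma add_mem_eigM {x y : ℂ ⊗[ℝ] M} (hx : x ∈ eigM T) (hy : y ∈ eigM T) :
    x + y ∈ eigM T := by
  rw [mem_eigM_iff] at *
  rw [map_add, hx, hy, smul_add]

noncomputable def projEigP (T : ℂ ⊗[ℝ] M →ₗ[ℂ] ℂ ⊗[ℝ] M) (x : ℂ ⊗[ℝ] M) : ℂ ⊗[ℝ] M :=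
  (1/2 : ℂ) • (x - Complex.I • T x)

noncomputable def projEigM (T : ℂ ⊗[ℝ] M →ₗ[ℂ] ℂ ⊗[ℝ] M) (x : ℂ ⊗[ℝ] M) : ℂ ⊗[ℝ] M :=
  (1/2 : ℂ) • (x + Complex.I • T x)

lemma projEigP_add_projEigM (x : ℂ ⊗[ℝ] M) : projEigP T x + projEigM T x = x := by
  simp only [projEigP, projEigM]; module

lemma projEigP_mem_eigP (hT : ∀ e, T (T e) = -e) (x : ℂ ⊗[ℝ] M) : projEigP T x ∈ eigP T := by
  change T (projEigP T x) = _
  rw [projEigP, map_smul, map_sub, map_smul, hT]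
  match_scalars <;> simp [Complex.ext_iff]

lemma projEigM_mem_eigM (hT : ∀ e, T (T e) = -e) (x : ℂ ⊗[ℝ] M) : projEigM T x ∈ eigM T := by
  change T (projEigM T x) = _
  rw [projEigM, map_smul, map_add, map_smul, hT]
  match_scalars <;> simp [Complex.ext_iff]

lemma conjT_mem_eigM (hc : ∀ x, T (conjT M x) = conjT M (T x)) {x : ℂ ⊗[ℝ] M}
    (hx : x ∈ eigP T) : conjT M x ∈ eigM T := by
  change T _ = _
  rw [hc, hx, conjT_smul, Complex.conj_I, neg_smul]

lemma conjT_mem_eigP (hc : ∀ x, T (conjT M x) = conjT M (T x)) {x : ℂ ⊗[ℝ] M}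
    (hx : x ∈ eigM T) : conjT M x ∈ eigP T := by
  change T _ = _
  rw [hc, hx, map_neg, conjT_smul, Complex.conj_I, neg_smul, neg_neg]

lemma bilin_eq_zero_of_eigenvectors {Q : Type*} [AddCommGroup Q] [Module ℂ Q]
    {B : ℂ ⊗[ℝ] M →ₗ[ℂ] ℂ ⊗[ℝ] M →ₗ[ℂ] Q} (hB : ∀ x y, B (T x) (T y) = B x y)
    {c : ℂ} (hc : c * c = -1) {x y : ℂ ⊗[ℝ] M} (hx : T x = c • x) (hy : T y = c • y) :
    B x y = 0 := by
  have h := hB x y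
  simp only [hx, hy, map_smul, LinearMap.smul_apply, smul_smul, hc, neg_one_smul] at h
  linear_combination (norm := module) (-1/2 : ℂ) • h

lemma map_bracket_of_eigenvectors {br : ℂ ⊗[ℝ] M →ₗ[ℂ] ℂ ⊗[ℝ] M →ₗ[ℂ] ℂ ⊗[ℝ] M}
    (hT : ∀ e, T (T e) = -e) (hN : ∀ U V, nijGen (fun a b => br a b) T T U V = 0)
    {c : ℂ} (hc : c * c = -1) {x y : ℂ ⊗[ℝ] M} (hx : T x = c • x) (hy : T y = c • y) :
    T (br x y) = c • br x y := by
  have h := hN x y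
  simp only [nijGen, hx, hy, map_smul, LinearMap.smul_apply, hT, smul_smul, hc,
    neg_one_smul] at h
  have hw : br x y = -(c • T (br x y)) := by linear_combination (norm := module) (-1/4 : ℂ) • h
  conv_rhs => rw [hw, smul_neg, smul_smul, hc, neg_one_smul, neg_neg]

lemma nijGen_eq_zero_of_eigP {br : ℂ ⊗[ℝ] M →ₗ[ℂ] ℂ ⊗[ℝ] M →ₗ[ℂ] ℂ ⊗[ℝ] M}
    {F G : ℂ ⊗[ℝ] M →ₗ[ℂ] ℂ ⊗[ℝ] M} (hT : ∀ e, T (T e) = -e)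
    (hTc : ∀ x, T (conjT M x) = conjT M (T x))
    (hbr : ∀ x y, conjT M (br x y) = br (conjT M x) (conjT M y))
    (hF : ∀ x, conjT M (F x) = F (conjT M x)) (hG : ∀ x, conjT M (G x) = G (conjT M x))
    (hPP : ∀ x ∈ eigP T, ∀ y ∈ eigP T, nijGen (fun a b => br a b) F G x y = 0)
    (hPM : ∀ x ∈ eigP T, ∀ y ∈ eigM T, nijGen (fun a b => br a b) F G x y = 0)
    (U V : ℂ ⊗[ℝ] M) : nijGen (fun a b => br a b) F G U V = 0 := by
  have hconj (x y : ℂ ⊗[ℝ] M) (hxy : nijGen (fun a b => br a b) F G (conjT M x) (conjT M y) = 0) :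
      nijGen (fun a b => br a b) F G x y = 0 := by
    rw [← conjT_conjT x, ← conjT_conjT y, ← map_nijGen (conjT M) hbr hF hG, hxy, map_zero]
  have hMP : ∀ x ∈ eigM T, ∀ y ∈ eigP T, nijGen (fun a b => br a b) F G x y = 0 :=
    fun x hx y hy => hconj x y (hPM _ (conjT_mem_eigP hTc hx) _ (conjT_mem_eigM hTc hy))
  have hMM : ∀ x ∈ eigM T, ∀ y ∈ eigM T, nijGen (fun a b => br a b) F G x y = 0 :=
    fun x hx y hy => hconj x y (hPP _ (conjT_mem_eigP hTc hx) _ (conjT_mem_eigP hTc hy))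
  rw [← projEigP_add_projEigM (T := T) U, ← projEigP_add_projEigM (T := T) V, nijGen_add_left,
    nijGen_add_right, nijGen_add_right, hPP _ (projEigP_mem_eigP hT U) _ (projEigP_mem_eigP hT V),
    hPM _ (projEigP_mem_eigP hT U) _ (projEigM_mem_eigM hT V),
    hMP _ (projEigM_mem_eigM hT U) _ (projEigP_mem_eigP hT V),
    hMM _ (projEigM_mem_eigM hT U) _ (projEigM_mem_eigM hT V), add_zero, add_zero]

end Eigenspaces

namespace CourantAlgebroid

variable {A E : Type} [CommRing A] [Algebra ℝ A] [AddCommGroup E] [Module ℝ E]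
    [Module A E] [IsScalarTower ℝ A E] (C : CourantAlgebroid A E)

lemma pair_brac_add_pair_brac_swap (x y z : E) :
    C.pair (C.brac x y) z + C.pair (C.brac y x) z = C.anchor z (C.pair x y) := by
  rw [← LinearMap.add_apply, ← map_add, C.brac_add_swap, ← algebraMap_smul A (2 : ℝ), map_smul,
    LinearMap.smul_apply, C.pair_Dm, algebraMap_smul, smul_smul]
  norm_num

@[simp]
lemma pairC_tmul (z w : ℂ) (x y : E) :
    C.pairC (z ⊗ₜ x) (w ⊗ₜ y) = (z * w) ⊗ₜ C.pair x y := by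
  simp [pairC, pairR]

@[simp]
lemma bracC_tmul (z w : ℂ) (x y : E) :
    C.bracC (z ⊗ₜ x) (w ⊗ₜ y) = (z * w) ⊗ₜ C.brac x y := by
  simp [bracC]

@[simp]
lemma rhoC_tmul (z w : ℂ) (x : E) (f : A) :
    C.rhoC (z ⊗ₜ x) (w ⊗ₜ f) = (z * w) ⊗ₜ C.anchor x f := by
  simp [rhoC, rhoR]

lemma pairC_conjT (x y : ℂ ⊗[ℝ] E) :
    C.pairC (conjT E x) (conjT E y) = conjT A (C.pairC x y) :=
  bcBilin_conjT _ x y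

lemma bracC_conjT (x y : ℂ ⊗[ℝ] E) :
    C.bracC (conjT E x) (conjT E y) = conjT E (C.bracC x y) :=
  bcBilin_conjT _ x y

lemma pairC_comm (x y : ℂ ⊗[ℝ] E) : C.pairC x y = C.pairC y x :=
  bcBilin_comm C.pair_symm x y

lemma pairC_nondeg {x : ℂ ⊗[ℝ] E} (hx : ∀ y, C.pairC x y = 0) : x = 0 :=
  bcBilin_left_nondegenerate C.pair_nondeg hx

lemma rhoC_pairC (x y z : ℂ ⊗[ℝ] E) :
    C.rhoC x (C.pairC y z) = C.pairC (C.bracC x y) z + C.pairC y (C.bracC x z) := by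
  induction x using TensorProduct.induction_on with
  | zero => simp
  | add a b ha hb => simp only [map_add, LinearMap.add_apply, ha, hb]; abel
  | tmul a u =>
    induction y using TensorProduct.induction_on with
    | zero => simp
    | add s t hs ht => simp only [map_add, LinearMap.add_apply, hs, ht]; abel
    | tmul b v =>
      induction z using TensorProduct.induction_on with
      | zero => simp
      | add s t hs ht => simp only [map_add, hs, ht]; abel
      | tmul c w =>
        simp only [pairC_tmul, rhoC_tmul, bracC_tmul, C.anchor_pair, TensorProduct.tmul_add]
        ring_nf

lemma pairC_bracC_add_pairC_bracC_swap (x y z : ℂ ⊗[ℝ] E) :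
    C.pairC (C.bracC x y) z + C.pairC (C.bracC y x) z = C.rhoC z (C.pairC x y) := by
  induction x using TensorProduct.induction_on with
  | zero => simp
  | add a b ha hb => simp only [map_add, LinearMap.add_apply, ← ha, ← hb]; abel
  | tmul a u =>
    induction y using TensorProduct.induction_on with
    | zero => simp
    | add s t hs ht => simp only [map_add, LinearMap.add_apply, ← hs, ← ht]; abel
    | tmul b v =>
      induction z using TensorProduct.induction_on with
      | zero => simp
      | add s t hs ht => simp only [map_add, LinearMap.add_apply, ← hs, ← ht]; abel
      | tmul c w =>
        simp only [pairC_tmul, rhoC_tmul, bracC_tmul, ← C.pair_brac_add_pair_brac_swap,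
          TensorProduct.tmul_add]
        ring_nf

@[simp]
lemma cext_tmul (F : E →ₗ[A] E) (z : ℂ) (m : E) : cext F (z ⊗ₜ m) = z ⊗ₜ F m := rfl

lemma cext_conjT (F : E →ₗ[A] E) (x : ℂ ⊗[ℝ] E) :
    cext F (conjT E x) = conjT E (cext F x) :=
  baseChange_conjT _ x

lemma cext_cext_of_sq_eq_neg {F : E →ₗ[A] E} (hF : ∀ e, F (F e) = -e) (x : ℂ ⊗[ℝ] E) :
    cext F (cext F x) = -x := by
  induction x using TensorProduct.induction_on with
  | zero => simp
  | tmul z m => rw [cext_tmul, cext_tmul, hF, TensorProduct.tmul_neg]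
  | add a b ha hb => rw [map_add, map_add, ha, hb, neg_add]

lemma pairC_cext_cext {F : E →ₗ[A] E} (hF : ∀ x y, C.pair (F x) (F y) = C.pair x y)
    (x y : ℂ ⊗[ℝ] E) : C.pairC (cext F x) (cext F y) = C.pairC x y := by
  induction x using TensorProduct.induction_on with
  | zero => simp
  | add a b ha hb => simp only [map_add, LinearMap.add_apply, ha, hb]
  | tmul z m =>
    induction y using TensorProduct.induction_on with
    | zero => simp
    | tmul w n => rw [cext_tmul, cext_tmul, pairC_tmul, pairC_tmul, hF]
    | add a b ha hb => simp only [map_add, ha, hb]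

lemma nijGen_cext {F G : E →ₗ[A] E} (hN : ∀ U V, C.nij F G U V = 0) (U V : ℂ ⊗[ℝ] E) :
    nijGen (fun x y => C.bracC x y) (cext F) (cext G) U V = 0 := by
  induction U using TensorProduct.induction_on with
  | zero => simp [nijGen]
  | add a b ha hb => rw [nijGen_add_left, ha, hb, add_zero]
  | tmul z u =>
    induction V using TensorProduct.induction_on with
    | zero => simp [nijGen]
    | add a b ha hb => rw [nijGen_add_right, ha, hb, add_zero]
    | tmul w v =>
      have h := congrArg (fun r => (z * w) ⊗ₜ[ℝ] r) (hN u v)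
      simpa only [nij, nijGen, TensorProduct.tmul_sub, TensorProduct.tmul_add,
        TensorProduct.tmul_zero, cext_tmul, bracC_tmul] using h

end CourantAlgebroid

namespace CourantAlgebroid.IsComplexStr

variable {A E : Type} [CommRing A] [Algebra ℝ A] [AddCommGroup E] [Module ℝ E]
    [Module A E] [IsScalarTower ℝ A E] {C : CourantAlgebroid A E} {J : E →ₗ[A] E}

lemma cext_cext (hJ : C.IsComplexStr J) (x : ℂ ⊗[ℝ] E) : cext J (cext J x) = -x :=
  cext_cext_of_sq_eq_neg hJ.1.1 x

lemma pairC_cext (hJ : C.IsComplexStr J) (x y : ℂ ⊗[ℝ] E) :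
    C.pairC (cext J x) (cext J y) = C.pairC x y :=
  C.pairC_cext_cext hJ.1.2 x y

lemma projEigP_mem (hJ : C.IsComplexStr J) (x : ℂ ⊗[ℝ] E) :
    projEigP (cext J) x ∈ eigP (cext J) :=
  projEigP_mem_eigP hJ.cext_cext x

lemma projEigM_mem (hJ : C.IsComplexStr J) (x : ℂ ⊗[ℝ] E) :
    projEigM (cext J) x ∈ eigM (cext J) :=
  projEigM_mem_eigM hJ.cext_cext x

lemma pairC_eq_zero_of_mem_eigP (hJ : C.IsComplexStr J) {x y : ℂ ⊗[ℝ] E}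
    (hx : x ∈ eigP (cext J)) (hy : y ∈ eigP (cext J)) : C.pairC x y = 0 :=
  bilin_eq_zero_of_eigenvectors hJ.pairC_cext Complex.I_mul_I hx hy

lemma pairC_eq_zero_of_mem_eigM (hJ : C.IsComplexStr J) {x y : ℂ ⊗[ℝ] E}
    (hx : x ∈ eigM (cext J)) (hy : y ∈ eigM (cext J)) : C.pairC x y = 0 :=
  bilin_eq_zero_of_eigenvectors hJ.pairC_cext (by simp) (mem_eigM_iff.1 hx) (mem_eigM_iff.1 hy)

lemma bracC_mem_eigP (hJ : C.IsComplexStr J) {x y : ℂ ⊗[ℝ] E}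
    (hx : x ∈ eigP (cext J)) (hy : y ∈ eigP (cext J)) : C.bracC x y ∈ eigP (cext J) :=
  map_bracket_of_eigenvectors hJ.cext_cext (C.nijGen_cext hJ.2) Complex.I_mul_I hx hy

lemma bracC_mem_eigM (hJ : C.IsComplexStr J) {x y : ℂ ⊗[ℝ] E}
    (hx : x ∈ eigM (cext J)) (hy : y ∈ eigM (cext J)) : C.bracC x y ∈ eigM (cext J) :=
  mem_eigM_iff.2 <| map_bracket_of_eigenvectors hJ.cext_cext (C.nijGen_cext hJ.2) (by simp)
    (mem_eigM_iff.1 hx) (mem_eigM_iff.1 hy)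

lemma eq_zero_of_mem_eigM_of_pairC (hJ : C.IsComplexStr J) {X : ℂ ⊗[ℝ] E}
    (hX : X ∈ eigM (cext J)) (hp : ∀ ζ ∈ eigP (cext J), C.pairC X ζ = 0) : X = 0 :=
  C.pairC_nondeg fun y => by
    rw [← projEigP_add_projEigM (T := cext J) y, map_add, hp _ (hJ.projEigP_mem y),
      hJ.pairC_eq_zero_of_mem_eigM hX (hJ.projEigM_mem y), add_zero]

end CourantAlgebroid.IsComplexStr

namespace CourantAlgebroid

variable {A E : Type} [CommRing A] [Algebra ℝ A] [AddCommGroup E] [Module ℝ E]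
    [Module A E] [IsScalarTower ℝ A E]

/-- A holomorphic symplectic structure `Ω^♯ = Os` relative to `J`: here `Ω̄^♯ = conjOp Os`,
`L_J = eigP (cext J)` and `L*_J = eigM (cext J)`. -/
structure IsHolomorphicSymplectic (C : CourantAlgebroid A E) (J : E →ₗ[A] E)
    (Os : ℂ ⊗[ℝ] E →ₗ[ℂ] ℂ ⊗[ℝ] E) : Prop where
  isComplexStr : C.IsComplexStr J
  skew : ∀ ξ η, C.pairC (Os ξ) η = -C.pairC ξ (Os η)
  map_eq_zero_of_mem_eigP : ∀ e ∈ eigP (cext J), Os e = 0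
  map_mem_eigP_of_mem_eigM : ∀ e ∈ eigM (cext J), Os e ∈ eigP (cext J)
  anticomm : ∀ e, Os (conjOp Os e) + conjOp Os (Os e) = -e
  closed : ∀ ξ η ζ, ξ ∈ eigM (cext J) → η ∈ eigM (cext J) → ζ ∈ eigM (cext J) →
    C.rhoC ξ (C.pairC (Os η) ζ) - C.rhoC η (C.pairC (Os ξ) ζ)
      + C.rhoC ζ (C.pairC (Os ξ) η) - C.pairC (Os (C.bracC ξ η)) ζ
      + C.pairC (Os (C.bracC ξ ζ)) η - C.pairC (Os (C.bracC η ζ)) ξ = 0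

namespace IsHolomorphicSymplectic

variable {C : CourantAlgebroid A E} {J : E →ₗ[A] E} {Os : ℂ ⊗[ℝ] E →ₗ[ℂ] ℂ ⊗[ℝ] E}

lemma map_projEigM (h : C.IsHolomorphicSymplectic J Os) (x : ℂ ⊗[ℝ] E) :
    Os (projEigM (cext J) x) = Os x := by
  conv_rhs => rw [← projEigP_add_projEigM (T := cext J) x]
  rw [map_add, h.map_eq_zero_of_mem_eigP _ (h.isComplexStr.projEigP_mem x), zero_add]

lemma map_mem_eigP (h : C.IsHolomorphicSymplectic J Os) (x : ℂ ⊗[ℝ] E) :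
    Os x ∈ eigP (cext J) :=
  h.map_projEigM x ▸ h.map_mem_eigP_of_mem_eigM _ (h.isComplexStr.projEigM_mem x)

lemma conjOp_mem_eigM (h : C.IsHolomorphicSymplectic J Os) (x : ℂ ⊗[ℝ] E) :
    conjOp Os x ∈ eigM (cext J) :=
  conjT_mem_eigM (cext_conjT J) (h.map_mem_eigP _)

lemma conjOp_eq_zero_of_mem_eigM (h : C.IsHolomorphicSymplectic J Os) {x : ℂ ⊗[ℝ] E}
    (hx : x ∈ eigM (cext J)) : conjOp Os x = 0 := by
  rw [conjOp_apply, h.map_eq_zero_of_mem_eigP _ (conjT_mem_eigP (cext_conjT J) hx), map_zero]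

lemma map_conjOp_of_mem_eigP (h : C.IsHolomorphicSymplectic J Os) {x : ℂ ⊗[ℝ] E}
    (hx : x ∈ eigP (cext J)) : Os (conjOp Os x) = -x := by
  simpa [h.map_eq_zero_of_mem_eigP x hx] using h.anticomm x

lemma conjOp_map_of_mem_eigM (h : C.IsHolomorphicSymplectic J Os) {x : ℂ ⊗[ℝ] E}
    (hx : x ∈ eigM (cext J)) : conjOp Os (Os x) = -x := by
  simpa [h.conjOp_eq_zero_of_mem_eigM hx] using h.anticomm x

lemma map_map (h : C.IsHolomorphicSymplectic J Os) (x : ℂ ⊗[ℝ] E) : Os (Os x) = 0 :=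
  h.map_eq_zero_of_mem_eigP _ (h.map_mem_eigP x)

lemma conjOp_conjOp (h : C.IsHolomorphicSymplectic J Os) (x : ℂ ⊗[ℝ] E) :
    conjOp Os (conjOp Os x) = 0 :=
  h.conjOp_eq_zero_of_mem_eigM (h.conjOp_mem_eigM x)

lemma mem_eigP_of_map_eq_zero (h : C.IsHolomorphicSymplectic J Os) {x : ℂ ⊗[ℝ] E}
    (hx : Os x = 0) : x ∈ eigP (cext J) := by
  have hM : projEigM (cext J) x = 0 := by
    rw [← neg_eq_zero, ← h.conjOp_map_of_mem_eigM (h.isComplexStr.projEigM_mem x),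
      h.map_projEigM, hx, map_zero]
  rw [← projEigP_add_projEigM (T := cext J) x, hM, add_zero]
  exact h.isComplexStr.projEigP_mem x

lemma cext_J_map (h : C.IsHolomorphicSymplectic J Os) (x : ℂ ⊗[ℝ] E) :
    cext J (Os x) = Complex.I • Os x :=
  h.map_mem_eigP x

lemma cext_J_conjOp (h : C.IsHolomorphicSymplectic J Os) (x : ℂ ⊗[ℝ] E) :
    cext J (conjOp Os x) = -(Complex.I • conjOp Os x) :=
  h.conjOp_mem_eigM x

lemma map_cext_J (h : C.IsHolomorphicSymplectic J Os) (x : ℂ ⊗[ℝ] E) :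
    Os (cext J x) = -(Complex.I • Os x) := by
  have hP := h.isComplexStr.projEigP_mem x
  have hM := h.isComplexStr.projEigM_mem x
  conv_lhs => rw [← projEigP_add_projEigM (T := cext J) x]
  rw [map_add, mem_eigP_iff.1 hP, hM, map_add, map_smul, map_neg, map_smul,
    h.map_eq_zero_of_mem_eigP _ hP, smul_zero, zero_add, h.map_projEigM]

lemma conjOp_cext_J (h : C.IsHolomorphicSymplectic J Os) (x : ℂ ⊗[ℝ] E) :
    conjOp Os (cext J x) = Complex.I • conjOp Os x := by
  rw [conjOp_apply, ← cext_conjT, h.map_cext_J, map_neg, conjT_smul, Complex.conj_I, neg_smul,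
    neg_neg, conjOp_apply]

lemma pairC_map_swap (h : C.IsHolomorphicSymplectic J Os) (x y : ℂ ⊗[ℝ] E) :
    C.pairC (Os x) y = -C.pairC (Os y) x := by
  rw [h.skew, C.pairC_comm]

lemma conjOp_skew (h : C.IsHolomorphicSymplectic J Os) (x y : ℂ ⊗[ℝ] E) :
    C.pairC (conjOp Os x) y = -C.pairC x (conjOp Os y) := by
  have := congrArg (conjT A) (h.skew (conjT E x) (conjT E y))
  rwa [map_neg, ← C.pairC_conjT, ← C.pairC_conjT, conjT_conjT, conjT_conjT, ← conjOp_apply,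
    ← conjOp_apply] at this

lemma pairC_conjOp_map (h : C.IsHolomorphicSymplectic J Os) (x : ℂ ⊗[ℝ] E)
    {σ : ℂ ⊗[ℝ] E} (hσ : σ ∈ eigM (cext J)) :
    C.pairC (conjOp Os x) (Os σ) = C.pairC x σ := by
  rw [h.conjOp_skew, h.conjOp_map_of_mem_eigM hσ, map_neg, neg_neg]

/-- The closedness of `Ω`, rewritten through the Courant axioms. -/
lemma pairC_bracC_map_of_mem_eigM (h : C.IsHolomorphicSymplectic J Os) {x y z : ℂ ⊗[ℝ] E}
    (hx : x ∈ eigM (cext J)) (hy : y ∈ eigM (cext J)) (hz : z ∈ eigM (cext J)) :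
    C.pairC (C.bracC x (Os y) + C.bracC (Os x) y - Os (C.bracC x y)) z = 0 := by
  have e1 := C.rhoC_pairC x (Os y) z
  have e2 := C.rhoC_pairC y (Os x) z
  have e3 := C.pairC_bracC_add_pairC_bracC_swap (Os x) y z
  have e4 := h.pairC_map_swap y (C.bracC x z)
  have e5 := h.pairC_map_swap x (C.bracC y z)
  simp only [map_add, map_sub, LinearMap.add_apply, LinearMap.sub_apply]
  linear_combination (norm := module) h.closed x y z hx hy hz - e1 - e4 + e3 + e2 + e5

lemma conjOp_bracC_map_of_mem_eigM (h : C.IsHolomorphicSymplectic J Os) {x y : ℂ ⊗[ℝ] E}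
    (hx : x ∈ eigM (cext J)) (hy : y ∈ eigM (cext J)) :
    conjOp Os (C.bracC x (Os y) + C.bracC (Os x) y) = -C.bracC x y := by
  rw [← sub_eq_zero, sub_neg_eq_add]
  refine h.isComplexStr.eq_zero_of_mem_eigM_of_pairC
    (add_mem_eigM (h.conjOp_mem_eigM _) (h.isComplexStr.bracC_mem_eigM hx hy)) fun ζ hζ => ?_
  -- Every `ζ ∈ L_J` is `-Ω σ` with `σ = Ω̄ ζ ∈ L*_J`.
  have hσ := h.conjOp_mem_eigM ζ
  rw [← neg_neg ζ, ← h.map_conjOp_of_mem_eigP hζ, map_neg, neg_eq_zero]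
  generalize conjOp Os ζ = σ at hσ ⊢
  have hclosed := h.pairC_bracC_map_of_mem_eigM hx hy hσ
  rw [map_add, LinearMap.add_apply, h.pairC_conjOp_map _ hσ, C.pairC_comm (C.bracC x y),
    h.pairC_map_swap σ]
  simp only [map_add, map_sub, LinearMap.add_apply, LinearMap.sub_apply] at hclosed ⊢
  linear_combination (norm := module) hclosed

lemma map_bracC_conjOp_of_mem_eigP (h : C.IsHolomorphicSymplectic J Os) {x y : ℂ ⊗[ℝ] E}
    (hx : x ∈ eigP (cext J)) (hy : y ∈ eigP (cext J)) :
    Os (C.bracC x (conjOp Os y) + C.bracC (conjOp Os x) y) = -C.bracC x y := by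
  have := congrArg (conjT E) <| h.conjOp_bracC_map_of_mem_eigM
    (conjT_mem_eigM (cext_conjT J) hx) (conjT_mem_eigM (cext_conjT J) hy)
  simpa only [conjT_conjOp, map_add, map_neg, ← C.bracC_conjT, conjT_conjT,
    ← conjOp_apply] using this

lemma conjOp_bracC_conjOp_of_mem_eigP (h : C.IsHolomorphicSymplectic J Os) {x y : ℂ ⊗[ℝ] E}
    (hx : x ∈ eigP (cext J)) (hy : y ∈ eigP (cext J)) :
    conjOp Os (C.bracC x (conjOp Os y) + C.bracC (conjOp Os x) y) =
      C.bracC (conjOp Os x) (conjOp Os y) := by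
  have := h.conjOp_bracC_map_of_mem_eigM (h.conjOp_mem_eigM x) (h.conjOp_mem_eigM y)
  rwa [h.map_conjOp_of_mem_eigP hx, h.map_conjOp_of_mem_eigP hy, map_neg, map_neg,
    LinearMap.neg_apply, ← neg_add, map_neg, neg_inj, add_comm] at this

lemma bracC_conjOp_map (h : C.IsHolomorphicSymplectic J Os) {x y : ℂ ⊗[ℝ] E}
    (hx : x ∈ eigP (cext J)) (hy : y ∈ eigM (cext J)) :
    C.bracC (conjOp Os x) (Os y) - conjOp Os (C.bracC x (Os y))
      - Os (C.bracC (conjOp Os x) y) = C.bracC x y := by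
  -- The two identities above at `x` and `μ = Ω y ∈ L_J`, combined through `ΩΩ̄ + Ω̄Ω = -1`
  -- and `y = -Ω̄ μ`.
  have hμ := h.map_mem_eigP y
  have hy' : y = -conjOp Os (Os y) := by rw [h.conjOp_map_of_mem_eigM hy, neg_neg]
  have key := h.anticomm (C.bracC x (conjOp Os (Os y)) + C.bracC (conjOp Os x) (Os y))
  rw [h.map_bracC_conjOp_of_mem_eigP hx hμ, h.conjOp_bracC_conjOp_of_mem_eigP hx hμ,
    map_neg] at key
  generalize Os y = μ at hy' key
  subst hy'
  simp only [map_neg] at key ⊢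
  linear_combination (norm := module) key

lemma nijGen_smul_add_smul_conjOp_eigP_eigP (h : C.IsHolomorphicSymplectic J Os)
    (a b c d : ℂ) {x y : ℂ ⊗[ℝ] E} (hx : x ∈ eigP (cext J)) (hy : y ∈ eigP (cext J)) :
    nijGen (fun u v => C.bracC u v) ⇑(a • Os + b • conjOp Os) ⇑(c • Os + d • conjOp Os) x y
      = 0 := by
  have hw := h.isComplexStr.bracC_mem_eigP hx hy
  have h1 := h.map_bracC_conjOp_of_mem_eigP hx hy
  have h2 := h.conjOp_bracC_conjOp_of_mem_eigP hx hy
  simp only [map_add] at h1 h2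
  simp only [nijGen, LinearMap.add_apply, LinearMap.smul_apply, map_smul,
    h.map_eq_zero_of_mem_eigP x hx, h.map_eq_zero_of_mem_eigP y hy,
    h.map_eq_zero_of_mem_eigP _ hw, h.map_conjOp_of_mem_eigP hw, h.conjOp_conjOp, smul_zero,
    zero_add, add_zero]
  linear_combination (norm := module) (-(a * d) - c * b) • h1 - (2 * b * d) • h2

lemma nijGen_smul_add_smul_conjOp_eigP_eigM (h : C.IsHolomorphicSymplectic J Os)
    (a b c d : ℂ) {x y : ℂ ⊗[ℝ] E} (hx : x ∈ eigP (cext J)) (hy : y ∈ eigM (cext J)) :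
    nijGen (fun u v => C.bracC u v) ⇑(a • Os + b • conjOp Os) ⇑(c • Os + d • conjOp Os) x y
      = 0 := by
  have hxy := h.bracC_conjOp_map hx hy
  have hanti := h.anticomm (C.bracC x y)
  simp only [nijGen, LinearMap.add_apply, LinearMap.smul_apply, map_add, map_smul,
    h.map_eq_zero_of_mem_eigP x hx, h.conjOp_eq_zero_of_mem_eigM hy,
    h.map_eq_zero_of_mem_eigP _ (h.isComplexStr.bracC_mem_eigP hx (h.map_mem_eigP y)),
    h.conjOp_eq_zero_of_mem_eigM (h.isComplexStr.bracC_mem_eigM (h.conjOp_mem_eigM x) hy),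
    h.map_map, h.conjOp_conjOp, smul_zero, zero_add, add_zero]
  linear_combination (norm := module) (a * d + c * b) • hxy + (a * d + c * b) • hanti

lemma nijGen_smul_add_smul_conjOp_cext_J_eigP_eigP (h : C.IsHolomorphicSymplectic J Os)
    (a b : ℂ) {x y : ℂ ⊗[ℝ] E} (hx : x ∈ eigP (cext J)) (hy : y ∈ eigP (cext J)) :
    nijGen (fun u v => C.bracC u v) ⇑(a • Os + b • conjOp Os) (cext J) x y = 0 := by
  have hw := h.isComplexStr.bracC_mem_eigP hx hy
  have hu : C.bracC x (conjOp Os y) + C.bracC (conjOp Os x) y - conjOp Os (C.bracC x y)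
      ∈ eigP (cext J) := by
    apply h.mem_eigP_of_map_eq_zero
    rw [map_sub, h.map_bracC_conjOp_of_mem_eigP hx hy, h.map_conjOp_of_mem_eigP hw, sub_self]
  have hJu := mem_eigP_iff.1 hu
  simp only [map_sub, map_add, h.cext_J_conjOp] at hJu
  simp only [nijGen, LinearMap.add_apply, LinearMap.smul_apply, map_smul,
    h.map_eq_zero_of_mem_eigP x hx, h.map_eq_zero_of_mem_eigP y hy,
    h.map_eq_zero_of_mem_eigP _ hw, mem_eigP_iff.1 hx, mem_eigP_iff.1 hy, mem_eigP_iff.1 hw,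
    h.cext_J_conjOp, smul_zero, zero_add]
  linear_combination (norm := module) (-b) • hJu

lemma nijGen_smul_add_smul_conjOp_cext_J_eigP_eigM (h : C.IsHolomorphicSymplectic J Os)
    (a b : ℂ) {x y : ℂ ⊗[ℝ] E} (hx : x ∈ eigP (cext J)) (hy : y ∈ eigM (cext J)) :
    nijGen (fun u v => C.bracC u v) ⇑(a • Os + b • conjOp Os) (cext J) x y = 0 := by
  simp only [nijGen, LinearMap.add_apply, LinearMap.smul_apply, map_add, map_smul,
    h.map_eq_zero_of_mem_eigP x hx, h.conjOp_eq_zero_of_mem_eigM hy, mem_eigP_iff.1 hx,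
    mem_eigM_iff.1 hy, mem_eigP_iff.1 (h.isComplexStr.bracC_mem_eigP hx (h.map_mem_eigP y)),
    mem_eigM_iff.1 (h.isComplexStr.bracC_mem_eigM (h.conjOp_mem_eigM x) hy),
    h.map_cext_J, h.conjOp_cext_J, h.cext_J_map, h.cext_J_conjOp,
    smul_zero, smul_neg, zero_add, add_zero]
  module

lemma nijGen_smul_add_smul_conjOp (h : C.IsHolomorphicSymplectic J Os) {a b c d : ℂ}
    (hab : starRingEnd ℂ a = b) (hcd : starRingEnd ℂ c = d) (U V : ℂ ⊗[ℝ] E) :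
    nijGen (fun u v => C.bracC u v) ⇑(a • Os + b • conjOp Os) ⇑(c • Os + d • conjOp Os) U V
      = 0 :=
  nijGen_eq_zero_of_eigP (F := a • Os + b • conjOp Os) (G := c • Os + d • conjOp Os)
    h.isComplexStr.cext_cext (cext_conjT J) (fun x y => (C.bracC_conjT x y).symm)
    (fun x => (smul_add_smul_conjOp_conjT Os hab x).symm)
    (fun x => (smul_add_smul_conjOp_conjT Os hcd x).symm)
    (fun _ hx _ hy => h.nijGen_smul_add_smul_conjOp_eigP_eigP a b c d hx hy)
    (fun _ hx _ hy => h.nijGen_smul_add_smul_conjOp_eigP_eigM a b c d hx hy) U V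

lemma nijGen_smul_add_smul_conjOp_cext_J (h : C.IsHolomorphicSymplectic J Os) {a b : ℂ}
    (hab : starRingEnd ℂ a = b) (U V : ℂ ⊗[ℝ] E) :
    nijGen (fun u v => C.bracC u v) ⇑(a • Os + b • conjOp Os) (cext J) U V = 0 :=
  nijGen_eq_zero_of_eigP (F := a • Os + b • conjOp Os) h.isComplexStr.cext_cext (cext_conjT J)
    (fun x y => (C.bracC_conjT x y).symm) (fun x => (smul_add_smul_conjOp_conjT Os hab x).symm)
    (fun x => (cext_conjT J x).symm)
    (fun _ hx _ hy => h.nijGen_smul_add_smul_conjOp_cext_J_eigP_eigP a b hx hy)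
    (fun _ hx _ hy => h.nijGen_smul_add_smul_conjOp_cext_J_eigP_eigM a b hx hy) U V

lemma smul_add_smul_conjOp_sq (h : C.IsHolomorphicSymplectic J Os) (a b : ℂ)
    (x : ℂ ⊗[ℝ] E) :
    (a • Os + b • conjOp Os) ((a • Os + b • conjOp Os) x) = -((a * b) • x) := by
  have hanti := h.anticomm x
  simp only [LinearMap.add_apply, LinearMap.smul_apply, map_add, map_smul, h.map_map,
    h.conjOp_conjOp, smul_zero, zero_add, add_zero]
  linear_combination (norm := module) (a * b) • hanti

lemma pairC_smul_add_smul_conjOp (h : C.IsHolomorphicSymplectic J Os) (a b : ℂ)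
    (U V : ℂ ⊗[ℝ] E) :
    C.pairC ((a • Os + b • conjOp Os) U) ((a • Os + b • conjOp Os) V) =
      (a * b) • C.pairC U V := by
  have hanti := congrArg (C.pairC U) (h.anticomm V)
  simp only [map_add, map_neg] at hanti
  simp only [map_add, map_smul, LinearMap.add_apply, LinearMap.smul_apply,
    h.isComplexStr.pairC_eq_zero_of_mem_eigP (h.map_mem_eigP U) (h.map_mem_eigP V),
    h.isComplexStr.pairC_eq_zero_of_mem_eigM (h.conjOp_mem_eigM U) (h.conjOp_mem_eigM V),
    h.skew U, h.conjOp_skew U, smul_zero, zero_add, add_zero]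
  linear_combination (norm := module) (-(a * b)) • hanti

lemma cext_J_smul_add_smul_conjOp (h : C.IsHolomorphicSymplectic J Os) (a b : ℂ)
    (x : ℂ ⊗[ℝ] E) :
    cext J ((a • Os + b • conjOp Os) x) =
      ((Complex.I * a) • Os + (-(Complex.I * b)) • conjOp Os) x := by
  simp only [LinearMap.add_apply, LinearMap.smul_apply, map_add, map_smul, h.cext_J_map,
    h.cext_J_conjOp]
  module

end IsHolomorphicSymplectic

end CourantAlgebroid

theorem stmt14 {A E : Type} [CommRing A] [Algebra ℝ A] [AddCommGroup E] [Module ℝ E]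
    [Module A E] [IsScalarTower ℝ A E] (C : CourantAlgebroid A E) (J : E →ₗ[A] E)
    (hJ : C.IsComplexStr J) (Os : ℂ ⊗[ℝ] E →ₗ[ℂ] ℂ ⊗[ℝ] E)
    (hskew : ∀ ξ η : ℂ ⊗[ℝ] E, C.pairC (Os ξ) η = -C.pairC ξ (Os η))
    (hLp : ∀ e ∈ eigP (cext (A := A) (E := E) J), Os e = 0)
    (hLm : ∀ e ∈ eigM (cext (A := A) (E := E) J), Os e ∈ eigP (cext (A := A) (E := E) J))
    (hnd : ∀ e : ℂ ⊗[ℝ] E,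
      Os (conjT E (Os (conjT E e))) + conjT E (Os (conjT E (Os e))) = -e)
    (hclosed : ∀ ξ η ζ : ℂ ⊗[ℝ] E,
      ξ ∈ eigM (cext (A := A) (E := E) J) → η ∈ eigM (cext (A := A) (E := E) J) →
      ζ ∈ eigM (cext (A := A) (E := E) J) →
      C.rhoC ξ (C.pairC (Os η) ζ) - C.rhoC η (C.pairC (Os ξ) ζ)
        + C.rhoC ζ (C.pairC (Os ξ) η) - C.pairC (Os (C.bracC ξ η)) ζ
        + C.pairC (Os (C.bracC ξ ζ)) η - C.pairC (Os (C.bracC η ζ)) ξ = 0) :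
    (∀ e : ℂ ⊗[ℝ] E,
      (Os (conjT E e) + conjT E (Os (conjT E (conjT E e)))) =
        conjT E (Os e + conjT E (Os (conjT E e)))) ∧
    (∀ e : ℂ ⊗[ℝ] E,
      (-Complex.I) • (Os (conjT E e) - conjT E (Os (conjT E (conjT E e)))) =
        conjT E ((-Complex.I) • (Os e - conjT E (Os (conjT E e))))) ∧
    (∀ e : ℂ ⊗[ℝ] E,
      (fun x => Os x + conjT E (Os (conjT E x)))
        ((fun x => Os x + conjT E (Os (conjT E x))) e) = -e) ∧
    (∀ e : ℂ ⊗[ℝ] E, cext J (cext J e) = -e) ∧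
    (∀ e : ℂ ⊗[ℝ] E,
      (fun x => (-Complex.I) • (Os x - conjT E (Os (conjT E x))))
        ((fun x => (-Complex.I) • (Os x - conjT E (Os (conjT E x)))) e) = -e) ∧
    (∀ e : ℂ ⊗[ℝ] E,
      (fun x => Os x + conjT E (Os (conjT E x)))
        (cext J ((fun x => (-Complex.I) • (Os x - conjT E (Os (conjT E x)))) e)) = -e) ∧
    (∀ U V : ℂ ⊗[ℝ] E,
      C.pairC ((fun x => Os x + conjT E (Os (conjT E x))) U)
          ((fun x => Os x + conjT E (Os (conjT E x))) V) = C.pairC U V) ∧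
    (∀ U V : ℂ ⊗[ℝ] E, C.pairC (cext (A := A) J U) (cext (A := A) J V) = C.pairC U V) ∧
    (∀ U V : ℂ ⊗[ℝ] E,
      C.pairC ((fun x => (-Complex.I) • (Os x - conjT E (Os (conjT E x)))) U)
          ((fun x => (-Complex.I) • (Os x - conjT E (Os (conjT E x)))) V) = C.pairC U V) ∧
    (∀ F G : (ℂ ⊗[ℝ] E) → ℂ ⊗[ℝ] E,
      F ∈ ({fun x => Os x + conjT E (Os (conjT E x)),
            fun x => (cext J : (ℂ ⊗[ℝ] E) →ₗ[ℂ] ℂ ⊗[ℝ] E) x,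
            fun x => (-Complex.I) • (Os x - conjT E (Os (conjT E x)))} :
          Set ((ℂ ⊗[ℝ] E) → ℂ ⊗[ℝ] E)) →
      G ∈ ({fun x => Os x + conjT E (Os (conjT E x)),
            fun x => (cext J : (ℂ ⊗[ℝ] E) →ₗ[ℂ] ℂ ⊗[ℝ] E) x,
            fun x => (-Complex.I) • (Os x - conjT E (Os (conjT E x)))} :
          Set ((ℂ ⊗[ℝ] E) → ℂ ⊗[ℝ] E)) →
      ∀ U V : ℂ ⊗[ℝ] E, nijGen (fun x y => C.bracC x y) F G U V = 0) := by
  have h : C.IsHolomorphicSymplectic J Os := ⟨hJ, hskew, hLp, hLm, hnd, hclosed⟩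
  have hI (x : ℂ ⊗[ℝ] E) :
      Os x + conjT E (Os (conjT E x)) = ((1 : ℂ) • Os + (1 : ℂ) • conjOp Os) x := by
    simp [conjOp_apply]
  have hK (x : ℂ ⊗[ℝ] E) : (-Complex.I) • (Os x - conjT E (Os (conjT E x))) =
      ((-Complex.I) • Os + Complex.I • conjOp Os) x := by
    simp [conjOp_apply, sub_eq_add_neg]
  have hconjK : starRingEnd ℂ (-Complex.I) = Complex.I := by simp
  simp only [hI, hK]
  refine ⟨smul_add_smul_conjOp_conjT Os (map_one _), smul_add_smul_conjOp_conjT Os hconjK,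
    fun e => ?_, hJ.cext_cext, fun e => ?_, fun e => ?_, fun U V => ?_,
    hJ.pairC_cext, fun U V => ?_, ?_⟩
  · rw [h.smul_add_smul_conjOp_sq, one_mul, one_smul]
  · rw [h.smul_add_smul_conjOp_sq, neg_mul, Complex.I_mul_I, neg_neg, one_smul]
  · rw [h.cext_J_smul_add_smul_conjOp, mul_neg, Complex.I_mul_I, neg_neg,
      h.smul_add_smul_conjOp_sq, one_mul, one_smul]
  · rw [h.pairC_smul_add_smul_conjOp, one_mul, one_smul]
  · rw [h.pairC_smul_add_smul_conjOp, neg_mul, Complex.I_mul_I, neg_neg, one_smul]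
  · intro F G hF hG U V
    simp only [Set.mem_insert_iff, Set.mem_singleton_iff] at hF hG
    rcases hF with rfl | rfl | rfl <;> rcases hG with rfl | rfl | rfl
    · exact h.nijGen_smul_add_smul_conjOp (map_one _) (map_one _) U V
    · exact h.nijGen_smul_add_smul_conjOp_cext_J (map_one _) U V
    · exact h.nijGen_smul_add_smul_conjOp (map_one _) hconjK U V
    · exact (nijGen_comm _ _ _ U V).trans
        (h.nijGen_smul_add_smul_conjOp_cext_J (map_one _) U V)
    · exact C.nijGen_cext hJ.2 U V
    · exact (nijGen_comm _ _ _ U V).trans (h.nijGen_smul_add_smul_conjOp_cext_J hconjK U V)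
    · exact h.nijGen_smul_add_smul_conjOp hconjK (map_one _) U V
    · exact h.nijGen_smul_add_smul_conjOp_cext_J hconjK U V
    · exact h.nijGen_smul_add_smul_conjOp hconjK hconjK U V
end

section
/- Let (I,J,K) be a hypercomplex structure on E and let a, b ∈ ℝ. Then J_{a,b} := ((1−a²−b²)/(1+a²+b²))·J + (2a/(1+a²+b²))·K + (2b/(1+a²+b²))·I is a complex structure on E, and for every ξ ∈ L*_J one has J_{a,b}((1 + (a+bi)·Ω^♯)ξ) = −i·(1 + (a+bi)·Ω^♯)ξ; that is, (1 + (a+bi)·Ω^♯)(L*_J) is contained in the (−i)-eigenspace of J_{a,b} acting on E_ℂ. -/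
open scoped TensorProduct
open CourantAlgebroid

/-!
`I`, `J`, `K` are skew for the pairing, square to `-1` and pairwise anticommute, so every
combination `x • J + y • K + z • I` with `x² + y² + z² = 1` is skew with square `-1`, hence
orthogonal. The Nijenhuis concomitant is symmetric and bilinear in its two arguments, so that of
such a combination is a combination of the six vanishing ones. The coefficients of `J_{a,b}` are
the inverse stereographic projection of `(a, b)`, a point of the unit sphere.

On `L*_J` one has `K = IJ = -i I`, so `Ω^♯` restricts to `I`, which maps `L*_J` into `L_J`; on
the span of `ξ` and `Iξ` the eigen-equation for `J_{a,b}` becomes two polynomial identities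
in `a`, `b`.
-/

structure QuaternionRelations {R : Type*} [Ring R] (i j k : R) : Prop where
  i_mul_i : i * i = -1
  j_mul_j : j * j = -1
  k_mul_k : k * k = -1
  i_mul_j_mul_k : i * j * k = -1

namespace QuaternionRelations

variable {R : Type*} [Ring R] {i j k : R}

theorem i_mul_j (h : QuaternionRelations i j k) : i * j = k := by
  have := congrArg (· * k) h.i_mul_j_mul_k
  simpa [mul_assoc, h.k_mul_k] using this

theorem j_mul_k (h : QuaternionRelations i j k) : j * k = i := by
  have := congrArg (i * ·) h.i_mul_j_mul_k
  simpa [← mul_assoc, h.i_mul_i] using this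

theorem k_mul_i (h : QuaternionRelations i j k) : k * i = j := by
  have := congrArg (j * ·) (show j * (k * i) = -1 by rw [← mul_assoc, h.j_mul_k, h.i_mul_i])
  simpa [← mul_assoc, h.j_mul_j] using this

theorem j_mul_i (h : QuaternionRelations i j k) : j * i = -k := by
  rw [← h.j_mul_k, ← mul_assoc, h.j_mul_j, neg_one_mul]

theorem k_mul_j (h : QuaternionRelations i j k) : k * j = -i := by
  rw [← h.k_mul_i, ← mul_assoc, h.k_mul_k, neg_one_mul]

theorem i_mul_k (h : QuaternionRelations i j k) : i * k = -j := by
  rw [← h.i_mul_j, ← mul_assoc, h.i_mul_i, neg_one_mul]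

end QuaternionRelations

theorem mul_self_smul_add_smul_add_smul_eq_neg_one {R : Type*} [Ring R] [Algebra ℝ R]
    {x y z : R} (hx : x * x = -1) (hy : y * y = -1) (hz : z * z = -1)
    (hxy : y * x = -(x * y)) (hxz : z * x = -(x * z)) (hyz : z * y = -(y * z))
    {a b c : ℝ} (habc : a ^ 2 + b ^ 2 + c ^ 2 = 1) :
    (a • x + b • y + c • z) * (a • x + b • y + c • z) = -1 := by
  simp only [add_mul, mul_add, smul_mul_smul_comm, hx, hy, hz, hxy, hxz, hyz]
  linear_combination (norm := module) (-habc) • (1 : R)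

theorem inverse_stereographic_sum_sq (a b : ℝ) :
    ((1 - a ^ 2 - b ^ 2) / (1 + a ^ 2 + b ^ 2)) ^ 2 + (2 * a / (1 + a ^ 2 + b ^ 2)) ^ 2
      + (2 * b / (1 + a ^ 2 + b ^ 2)) ^ 2 = 1 := by
  field_simp
  ring

namespace CourantAlgebroid

variable {A E : Type} [CommRing A] [Algebra ℝ A]
    [AddCommGroup E] [Module ℝ E] [Module A E] [IsScalarTower ℝ A E]

def IsSkew (C : CourantAlgebroid A E) (F : E →ₗ[A] E) : Prop :=
  ∀ x y, C.pair (F x) y = -C.pair x (F y)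

section

variable {C : CourantAlgebroid A E} {F G : E →ₗ[A] E}

theorem IsAlmostComplexStr.mul_self (hF : C.IsAlmostComplexStr F) : F * F = -1 :=
  LinearMap.ext hF.1

theorem IsAlmostComplexStr.isSkew (hF : C.IsAlmostComplexStr F) : C.IsSkew F := by
  intro x y
  conv_lhs => rw [← neg_neg y, ← hF.1 y, ← map_neg, hF.2]
  rw [map_neg]

theorem IsSkew.add (hF : C.IsSkew F) (hG : C.IsSkew G) : C.IsSkew (F + G) := by
  intro x y
  simp only [LinearMap.add_apply, map_add, hF x y, hG x y]
  abel

theorem IsSkew.smul (hF : C.IsSkew F) (r : ℝ) : C.IsSkew (r • F) := by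
  intro x y
  simp only [LinearMap.smul_apply, LinearMap.map_smul_of_tower, hF x y, smul_neg]

theorem IsSkew.isAlmostComplexStr (hF : C.IsSkew F) (hsq : F * F = -1) :
    C.IsAlmostComplexStr F := by
  have hsq' (e : E) : F (F e) = -e := LinearMap.congr_fun hsq e
  refine ⟨hsq', fun x y => ?_⟩
  rw [hF, hsq', map_neg, neg_neg]

theorem nij_comm (F G : E →ₗ[A] E) (U V : E) : C.nij F G U V = C.nij G F U V := by
  simp only [nij, nijGen]
  abel

theorem nij_add_left (F F' G : E →ₗ[A] E) (U V : E) :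
    C.nij (F + F') G U V = C.nij F G U V + C.nij F' G U V := by
  simp only [nij, nijGen, LinearMap.add_apply, map_add]
  abel

theorem nij_smul_left (r : ℝ) (F G : E →ₗ[A] E) (U V : E) :
    C.nij (r • F) G U V = r • C.nij F G U V := by
  simp only [nij, nijGen, LinearMap.smul_apply, LinearMap.map_smul_of_tower]
  module

theorem nij_add_right (F G G' : E →ₗ[A] E) (U V : E) :
    C.nij F (G + G') U V = C.nij F G U V + C.nij F G' U V := by
  rw [nij_comm, nij_add_left, nij_comm G, nij_comm G']

theorem nij_smul_right (r : ℝ) (F G : E →ₗ[A] E) (U V : E) :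
    C.nij F (r • G) U V = r • C.nij F G U V := by
  rw [nij_comm, nij_smul_left, nij_comm]

variable {I J K : E →ₗ[A] E}

theorem IsAlmostHypercomplex.quaternionRelations (h : C.IsAlmostHypercomplex I J K) :
    QuaternionRelations I J K :=
  ⟨h.1.mul_self, h.2.1.mul_self, h.2.2.1.mul_self, LinearMap.ext h.2.2.2⟩

theorem IsHypercomplex.nij_smul_add_smul_add_smul (h : C.IsHypercomplex I J K)
    (x y z : ℝ) (U V : E) :
    C.nij (x • J + y • K + z • I) (x • J + y • K + z • I) U V = 0 := by
  obtain ⟨-, hII, hIJ, hIK, hJJ, hJK, hKK⟩ := h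
  have hJI : C.nij J I U V = 0 := by rw [nij_comm, hIJ]
  have hKI : C.nij K I U V = 0 := by rw [nij_comm, hIK]
  have hKJ : C.nij K J U V = 0 := by rw [nij_comm, hJK]
  simp only [nij_add_left, nij_add_right, nij_smul_left, nij_smul_right, hII, hIJ, hIK, hJI,
    hJJ, hJK, hKI, hKJ, hKK, smul_zero, add_zero]

theorem IsHypercomplex.isComplexStr_smul_add_smul_add_smul (h : C.IsHypercomplex I J K)
    {x y z : ℝ} (hxyz : x ^ 2 + y ^ 2 + z ^ 2 = 1) :
    C.IsComplexStr (x • J + y • K + z • I) := by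
  obtain ⟨hI, hJ, hK, -⟩ := h.1
  have hq := h.1.quaternionRelations
  have hskew := ((hJ.isSkew.smul x).add (hK.isSkew.smul y)).add (hI.isSkew.smul z)
  have hsq := mul_self_smul_add_smul_add_smul_eq_neg_one hJ.mul_self hK.mul_self hI.mul_self
    (by rw [hq.k_mul_j, hq.j_mul_k]) (by rw [hq.i_mul_j, hq.j_mul_i, neg_neg])
    (by rw [hq.i_mul_k, hq.k_mul_i]) hxyz
  exact ⟨hskew.isAlmostComplexStr hsq, h.nij_smul_add_smul_add_smul x y z⟩

end

theorem cext_mul (F G : E →ₗ[A] E) : cext (F * G) = cext F * cext G := by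
  rw [cext, cext, cext, ← LinearMap.baseChange_mul]
  rfl

theorem cext_add (F G : E →ₗ[A] E) : cext (F + G) = cext F + cext G := by
  rw [cext, cext, cext, ← LinearMap.baseChange_add]
  rfl

theorem cext_smul (r : ℝ) (F : E →ₗ[A] E) : cext (r • F) = (r : ℂ) • cext F := by
  refine LinearMap.ext fun x => ?_
  rw [LinearMap.smul_apply, Complex.coe_smul]
  exact LinearMap.congr_fun (LinearMap.baseChange_smul r (F.restrictScalars ℝ)) x

theorem cext_apply_cext_apply (F G : E →ₗ[A] E) (x : ℂ ⊗[ℝ] E) :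
    cext F (cext G x) = cext (F * G) x := by
  rw [cext_mul, Module.End.mul_apply]

theorem cext_apply_cext_apply_of_mul_self {F : E →ₗ[A] E} (hF : F * F = -1) (x : ℂ ⊗[ℝ] E) :
    cext F (cext F x) = -x := by
  rw [cext_apply_cext_apply, hF]
  change ((-1 : Module.End ℝ E).baseChange ℂ) x = -x
  rw [LinearMap.baseChange_neg, LinearMap.baseChange_one]
  rfl

namespace QuaternionRelations

variable {I J K : E →ₗ[A] E} (h : QuaternionRelations I J K)
  {ξ : ℂ ⊗[ℝ] E} (hξ : ξ ∈ eigM (cext J))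

include h hξ

theorem cext_K_apply_of_mem_eigM : cext K ξ = -(Complex.I • cext I ξ) := by
  rw [← h.i_mul_j, ← cext_apply_cext_apply, hξ, map_neg, map_smul]

theorem cext_I_apply_mem_eigP : cext I ξ ∈ eigP (cext J) := by
  change cext J (cext I ξ) = Complex.I • cext I ξ
  rw [cext_apply_cext_apply, h.j_mul_i, ← neg_one_smul ℝ K, cext_smul,
    LinearMap.smul_apply, h.cext_K_apply_of_mem_eigM hξ]
  simp

theorem cext_K_apply_cext_I_apply_of_mem_eigM : cext K (cext I ξ) = -(Complex.I • ξ) := by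
  rw [cext_apply_cext_apply, h.k_mul_i, hξ]

theorem OmS_apply_of_mem_eigM : OmS I K ξ = cext I ξ := by
  rw [OmS, LinearMap.smul_apply, LinearMap.add_apply, LinearMap.smul_apply,
    h.cext_K_apply_of_mem_eigM hξ, smul_neg, smul_smul, Complex.I_mul_I]
  module

theorem cext_inverse_stereographic_apply_of_mem_eigM (a b : ℝ) :
    cext (((1 - a ^ 2 - b ^ 2) / (1 + a ^ 2 + b ^ 2)) • J +
        (2 * a / (1 + a ^ 2 + b ^ 2)) • K + (2 * b / (1 + a ^ 2 + b ^ 2)) • I)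
      (ξ + ((a : ℂ) + (b : ℂ) * Complex.I) • OmS I K ξ) =
    -(Complex.I • (ξ + ((a : ℂ) + (b : ℂ) * Complex.I) • OmS I K ξ)) := by
  have hJη : cext J (cext I ξ) = Complex.I • cext I ξ := h.cext_I_apply_mem_eigP hξ
  rw [h.OmS_apply_of_mem_eigM hξ, cext_add, cext_add, cext_smul, cext_smul, cext_smul]
  simp only [LinearMap.add_apply, LinearMap.smul_apply, map_add, map_smul, hξ.out, hJη,
    h.cext_K_apply_of_mem_eigM hξ, h.cext_K_apply_cext_I_apply_of_mem_eigM hξ,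
    cext_apply_cext_apply_of_mul_self h.i_mul_i]
  have hs : (1 + (a : ℂ) ^ 2 + (b : ℂ) ^ 2) ≠ 0 := by
    exact_mod_cast (by positivity : (1 + a ^ 2 + b ^ 2 : ℝ) ≠ 0)
  match_scalars
  · field_simp
    linear_combination (-2 * a * b : ℂ) * Complex.I_sq
  · field_simp
    linear_combination (2 * b : ℂ) * Complex.I_sq

end QuaternionRelations

end CourantAlgebroid

theorem stmt15 {A E : Type} [CommRing A] [Algebra ℝ A] [AddCommGroup E] [Module ℝ E]
    [Module A E] [IsScalarTower ℝ A E] (C : CourantAlgebroid A E) (I J K : E →ₗ[A] E)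
    (h : C.IsHypercomplex I J K) (a b : ℝ) :
    (∀ e : E,
      (((1 - a ^ 2 - b ^ 2) / (1 + a ^ 2 + b ^ 2)) • J + (2 * a / (1 + a ^ 2 + b ^ 2)) • K +
          (2 * b / (1 + a ^ 2 + b ^ 2)) • I)
        ((((1 - a ^ 2 - b ^ 2) / (1 + a ^ 2 + b ^ 2)) • J + (2 * a / (1 + a ^ 2 + b ^ 2)) • K +
          (2 * b / (1 + a ^ 2 + b ^ 2)) • I) e) = -e) ∧
    (∀ U V : E,
      C.pair ((((1 - a ^ 2 - b ^ 2) / (1 + a ^ 2 + b ^ 2)) • J +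
          (2 * a / (1 + a ^ 2 + b ^ 2)) • K + (2 * b / (1 + a ^ 2 + b ^ 2)) • I) U)
        ((((1 - a ^ 2 - b ^ 2) / (1 + a ^ 2 + b ^ 2)) • J +
          (2 * a / (1 + a ^ 2 + b ^ 2)) • K + (2 * b / (1 + a ^ 2 + b ^ 2)) • I) V) =
        C.pair U V) ∧
    (∀ U V : E,
      C.nij (((1 - a ^ 2 - b ^ 2) / (1 + a ^ 2 + b ^ 2)) • J +
          (2 * a / (1 + a ^ 2 + b ^ 2)) • K + (2 * b / (1 + a ^ 2 + b ^ 2)) • I)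
        (((1 - a ^ 2 - b ^ 2) / (1 + a ^ 2 + b ^ 2)) • J +
          (2 * a / (1 + a ^ 2 + b ^ 2)) • K + (2 * b / (1 + a ^ 2 + b ^ 2)) • I) U V = 0) ∧
    (∀ ξ ∈ eigM (cext (A := A) (E := E) J),
      cext (((1 - a ^ 2 - b ^ 2) / (1 + a ^ 2 + b ^ 2)) • J +
          (2 * a / (1 + a ^ 2 + b ^ 2)) • K + (2 * b / (1 + a ^ 2 + b ^ 2)) • I)
        (ξ + ((a : ℂ) + (b : ℂ) * Complex.I) • OmS I K ξ) =
      -(Complex.I • (ξ + ((a : ℂ) + (b : ℂ) * Complex.I) • OmS I K ξ))) := by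
  obtain ⟨⟨hsq, horth⟩, hnij⟩ :=
    h.isComplexStr_smul_add_smul_add_smul (inverse_stereographic_sum_sq a b)
  exact ⟨hsq, horth, hnij, fun _ hξ =>
    h.1.quaternionRelations.cext_inverse_stereographic_apply_of_mem_eigM hξ a b⟩
end
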